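/- Let k ≥ 4 and n > (k+2)²/4. Then there is no primitive uniquely K_{n-1}^{(k)}-saturated hypergraph on n vertices. -/

import Mathlib

open Finset

/-- The edge set `E` is `k`-uniform. -/
def Uniform (n k : ℕ) (E : Finset (Finset (Fin n))) : Prop :=
  ∀ e ∈ E, e.card = k

/-- `H` contains a copy of the complete `k`-uniform hypergraph on `r` vertices. -/
def HasClique (n k r : ℕ) (E : Finset (Finset (Fin n))) : Prop :=
  ∃ Q : Finset (Fin n), Q.card = r ∧ ∀ T ⊆ Q, T.card = k → T ∈ E

/-- `H` is uniquely `K_r^(k)`-saturated: it has no `K_r^(k)`, and adding any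
non-edge `k`-set `S` creates exactly one copy of `K_r^(k)`. -/
def UniquelySat (n k r : ℕ) (E : Finset (Finset (Fin n))) : Prop :=
  ¬ HasClique n k r E ∧
  ∀ S : Finset (Fin n), S.card = k → S ∉ E →
    ∃! Q : Finset (Fin n), Q.card = r ∧ ∀ T ⊆ Q, T.card = k → (T ∈ E ∨ T = S)

/-- `H` has no dominating vertex. -/
def Primitive (n k : ℕ) (E : Finset (Finset (Fin n))) : Prop :=
  ¬ ∃ v : Fin n, ∀ S : Finset (Fin n), S.card = k → v ∈ S → S ∈ E

/-- `H` is a primitive uniquely `K_r^(k)`-saturated `k`-uniform hypergraph. -/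
def IsPUS (n k r : ℕ) (E : Finset (Finset (Fin n))) : Prop :=
  Uniform n k E ∧ UniquelySat n k r E ∧ Primitive n k E

/-!
Let `R` be the hypergraph of non-edges and `x = #R`. Adding a non-edge `S` creates a unique
`K_{n-1}`, which misses a single vertex `v`; then `v ∉ S` (as `H` itself has no `K_{n-1}`) and `S`
is the only non-edge avoiding `v`, so distinct non-edges get distinct such private vertices. Each of
these `x` vertices lies in at least `x - 1` non-edges and, by primitivity, every other vertex lies
in at least one, so counting incidences gives `x (x - 1) + (n - x) ≤ k x`. Hence the quadratic
`x² - (k + 2) x + n` takes a nonpositive value and its discriminant `(k + 2)² - 4 n` is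
nonnegative.
-/

section

variable {α : Type*} [Fintype α] [DecidableEq α] {k : ℕ}

def nonEdges (k : ℕ) (E : Finset (Finset α)) : Finset (Finset α) :=
  powersetCard k univ \ E

theorem mem_nonEdges {E : Finset (Finset α)} {S : Finset α} :
    S ∈ nonEdges k E ↔ #S = k ∧ S ∉ E := by
  simp [nonEdges]

theorem Finset.exists_eq_univ_erase_of_card_eq_pred [Nonempty α] {Q : Finset α}
    (hQ : #Q = Fintype.card α - 1) : ∃ v, Q = univ.erase v := by
  have : #Qᶜ = 1 := by
    rw [card_compl, hQ]
    have := Fintype.card_pos (α := α)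
    omega
  obtain ⟨v, hv⟩ := card_eq_one.mp this
  exact ⟨v, by rw [← compl_compl Q, hv, compl_singleton]⟩

variable {R : Finset (Finset α)}

theorem sum_card_filter_mem_eq_card_mul (hR : ∀ S ∈ R, #S = k) :
    ∑ a, #{S ∈ R | a ∈ S} = #R * k := by
  calc ∑ a, #{S ∈ R | a ∈ S} = ∑ S ∈ R, #S := by
        simp_rw [card_eq_sum_ones, sum_filter]
        rw [sum_comm]
        simp
    _ = #R * k := by rw [sum_congr rfl hR, sum_const, smul_eq_mul]

omit [Fintype α] in
theorem card_sub_one_le_card_filter_mem {S : Finset α} {v : α} (hS : S ∈ R)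
    (hv : ∀ T ∈ R, v ∉ T → T = S) : #R - 1 ≤ #{T ∈ R | v ∈ T} := by
  rw [← card_erase_of_mem hS]
  refine card_le_card fun T hT => ?_
  obtain ⟨hTS, hTR⟩ := mem_erase.mp hT
  exact mem_filter.mpr ⟨hTR, by_contra fun hvT => hTS (hv T hTR hvT)⟩

theorem card_mul_self_add_card_le (hR : ∀ S ∈ R, #S = k) (hcover : ∀ a, ∃ S ∈ R, a ∈ S)
    (hpriv : ∀ S ∈ R, ∃ v ∉ S, ∀ T ∈ R, v ∉ T → T = S) :
    #R * #R + Fintype.card α ≤ #R * (k + 2) := by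
  rcases R.eq_empty_or_nonempty with rfl | ⟨S₀, hS₀⟩
  · simpa [Fintype.card_eq_zero_iff] using ⟨fun a => by simpa using hcover a⟩
  have : Nonempty α := ⟨(hpriv S₀ hS₀).choose⟩
  choose! v hvS hv using hpriv
  have hinj : Set.InjOn v R := fun S hS T hT hST =>
    (hv S hS T hT (hST ▸ hvS T hT)).symm
  set A := R.image v
  have hA : #A = #R := card_image_of_injOn hinj
  have hpriv_sum : #R * (#R - 1) ≤ ∑ a ∈ A, #{S ∈ R | a ∈ S} := by
    rw [sum_image hinj, ← smul_eq_mul, ← sum_const]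
    exact sum_le_sum fun S hS => card_sub_one_le_card_filter_mem hS (hv S hS)
  have hrest_sum : #Aᶜ ≤ ∑ a ∈ Aᶜ, #{S ∈ R | a ∈ S} := by
    rw [card_eq_sum_ones]
    refine sum_le_sum fun a _ => card_pos.mpr ?_
    obtain ⟨S, hS, haS⟩ := hcover a
    exact ⟨S, mem_filter.mpr ⟨hS, haS⟩⟩
  have hcount := sum_add_sum_compl A (fun a => #{S ∈ R | a ∈ S})
  rw [sum_card_filter_mem_eq_card_mul hR] at hcount
  have hsplit := card_compl_add_card A
  rw [hA] at hsplit
  have hsq : #R * (#R - 1) + #R = #R * #R := by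
    rw [Nat.mul_sub_one, Nat.sub_add_cancel (Nat.le_mul_self _)]
  linarith [Nat.mul_add #R k 2]

end

theorem four_mul_le_sq_of_mul_self_add_le {x n k : ℕ} (h : x * x + n ≤ x * (k + 2)) :
    4 * n ≤ (k + 2) ^ 2 := by
  nlinarith [sq_nonneg ((k : ℤ) + 2 - 2 * x)]

theorem UniquelySat.exists_private_vertex {n k : ℕ} {E : Finset (Finset (Fin n))} (hn : 0 < n)
    (h : UniquelySat n k (n - 1) E) {S : Finset (Fin n)} (hS : S ∈ nonEdges k E) :
    ∃ v ∉ S, ∀ T ∈ nonEdges k E, v ∉ T → T = S := by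
  have : Nonempty (Fin n) := ⟨⟨0, hn⟩⟩
  obtain ⟨hSk, hSE⟩ := mem_nonEdges.mp hS
  obtain ⟨Q, ⟨hQ, hQS⟩, -⟩ := h.2 S hSk hSE
  obtain ⟨v, rfl⟩ := exists_eq_univ_erase_of_card_eq_pred (Q := Q) (by simpa using hQ)
  have hvS : v ∉ S := fun hvS => h.1 ⟨univ.erase v, hQ, fun T hT hTk =>
    (hQS T hT hTk).resolve_right (by rintro rfl; simpa using hT hvS)⟩
  refine ⟨v, hvS, fun T hT hvT => ?_⟩
  obtain ⟨hTk, hTE⟩ := mem_nonEdges.mp hT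
  exact (hQS T (subset_erase.mpr ⟨subset_univ T, hvT⟩) hTk).resolve_left hTE

theorem Primitive.exists_mem_nonEdges {n k : ℕ} {E : Finset (Finset (Fin n))}
    (h : Primitive n k E) (a : Fin n) : ∃ S ∈ nonEdges k E, a ∈ S := by
  by_contra! hcon
  exact h ⟨a, fun S hSk haS =>
    by_contra fun hSE => hcon S (mem_nonEdges.mpr ⟨hSk, hSE⟩) haS⟩

theorem stmt13_general (k n : ℕ) (hn : (k + 2) ^ 2 < 4 * n) :
    ¬ ∃ E : Finset (Finset (Fin n)), IsPUS n k (n - 1) E := by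
  rintro ⟨E, -, hsat, hprim⟩
  have hn0 : 0 < n := Nat.pos_of_ne_zero (by rintro rfl; simp at hn)
  have hquad := card_mul_self_add_card_le (fun S hS => (mem_nonEdges.mp hS).1)
    hprim.exists_mem_nonEdges fun S hS => hsat.exists_private_vertex hn0 hS
  rw [Fintype.card_fin] at hquad
  exact (four_mul_le_sq_of_mul_self_add_le hquad).not_gt hn

theorem stmt13 (k n : ℕ) (hk : 4 ≤ k) (hn : (k + 2) ^ 2 < 4 * n) :
    ¬ ∃ E : Finset (Finset (Fin n)), IsPUS n k (n - 1) E :=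
  stmt13_general k n hn
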